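/- arXiv:math/9811154 — 2 statements merged into one kernel-verified Lean document; each statement's English description precedes it below -/
import Mathlib

section
/- For every integer n ≥ 1 and every real t, the Toeplitz determinants satisfy D_{n+1}(t)·D_{n−1}(t)/D_n(t)² = 1 − U_n(t)². -/
open MeasureTheory Matrix Filter

/-- The k-th Fourier coefficient of the symbol `f(e^{iθ}) = e^{2t cos θ}`. -/
noncomputable def fk (t : ℝ) (k : ℤ) : ℝ :=
  (1 / (2 * Real.pi)) *
    ∫ θ in (0:ℝ)..(2 * Real.pi), Real.exp (2 * t * Real.cos θ) * Real.cos ((k : ℝ) * θ)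

/-- The n×n Toeplitz matrix `T_n(t)` with (j,k) entry `f_{j-k}(t)`. -/
noncomputable def Tmat (n : ℕ) (t : ℝ) : Matrix (Fin n) (Fin n) ℝ :=
  fun j k => fk t ((j : ℤ) - (k : ℤ))

/-- The Toeplitz determinant `D_n(t)`. -/
noncomputable def Dn (n : ℕ) (t : ℝ) : ℝ := (Tmat n t).det

/-- δ⁺ = (1,0,…,0)ᵀ. -/
def deltaPlus (n : ℕ) : Fin n → ℝ := fun i => if (i : ℕ) = 0 then 1 else 0

/-- δ⁻ = (0,…,0,1)ᵀ. -/
def deltaMinus (n : ℕ) : Fin n → ℝ := fun i => if (i : ℕ) = n - 1 then 1 else 0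

/-- f⁺ = (f_1,…,f_n)ᵀ. -/
noncomputable def fplus (n : ℕ) (t : ℝ) : Fin n → ℝ := fun j => fk t ((j : ℤ) + 1)

/-- f⁻ = (f_n,…,f_1)ᵀ. -/
noncomputable def fminus (n : ℕ) (t : ℝ) : Fin n → ℝ := fun j => fk t ((n : ℤ) - (j : ℤ))

/-- U_n(t) = ⟨T_n(t)⁻¹ f⁺, δ⁻⟩. -/
noncomputable def Un (n : ℕ) (t : ℝ) : ℝ :=
  dotProduct ((Tmat n t)⁻¹ *ᵥ fplus n t) (deltaMinus n)

/-- V_n⁺(t) = ⟨T_n(t)⁻¹ δ⁺, δ⁺⟩. -/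
noncomputable def Vplus (n : ℕ) (t : ℝ) : ℝ :=
  dotProduct ((Tmat n t)⁻¹ *ᵥ deltaPlus n) (deltaPlus n)

/-- V_n⁻(t) = ⟨T_n(t)⁻¹ δ⁻, δ⁺⟩. -/
noncomputable def Vminus (n : ℕ) (t : ℝ) : ℝ :=
  dotProduct ((Tmat n t)⁻¹ *ᵥ deltaMinus n) (deltaPlus n)

/-!
Bordering `T_{n+1}` by its first row and column gives `D_{n+1} = D_n σ_n` with the Schur
complement `σ_n = f_0 - ⟨f⁺, T_n⁻¹ f⁺⟩`. Bordering `T_n` by its last row and column instead and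
solving `T_n x = f⁺` blockwise gives `⟨f⁺, x⟩ = ⟨f⁺, T_{n-1}⁻¹ f⁺⟩ + x_n² σ`, where `σ` is the
Schur complement of the last entry and `x_n = U_n`. Since a symmetric Toeplitz matrix is
invariant under reversing the indices, `σ = σ_{n-1}`, whence the Levinson–Durbin recursion
`σ_n = σ_{n-1} (1 - U_n²)`. All the `T_n` are invertible because the symbol is bounded below by
`e^{-2|t|}`, so that `T_n ≥ e^{-2|t|} I`.
-/

namespace Matrix

section Bordering
variable {R : Type*} [CommRing R]

theorem det_succ_eq_det_submatrix_succ_mul {n : ℕ} (M : Matrix (Fin (n + 1)) (Fin (n + 1)) R)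
    (hA : IsUnit (M.submatrix Fin.succ Fin.succ).det) :
    M.det = (M.submatrix Fin.succ Fin.succ).det *
      (M 0 0 - (fun j => M 0 j.succ) ⬝ᵥ
        ((M.submatrix Fin.succ Fin.succ)⁻¹ *ᵥ fun i => M i.succ 0)) := by
  set A := M.submatrix Fin.succ Fin.succ
  let _ := A.invertibleOfIsUnitDet hA
  let e : Fin n ⊕ Unit ≃ Fin (n + 1) :=
    (Equiv.optionEquivSumPUnit (Fin n)).symm.trans (finSuccEquiv n).symm
  have hblocks : M.submatrix e e = fromBlocks A (of fun i _ => M i.succ 0)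
      (of fun _ j => M 0 j.succ) (of fun _ _ => M 0 0) := by
    ext (i | i) (j | j) <;> rfl
  rw [← det_submatrix_equiv_self e, hblocks, det_fromBlocks₁₁, invOf_eq_nonsing_inv]
  congr 1
  rw [det_unique]
  simp only [sub_apply, of_apply, mul_apply, dotProduct, mulVec, Finset.sum_mul, Finset.mul_sum]
  rw [Finset.sum_comm]
  simp_rw [mul_assoc]

theorem IsSymm.dotProduct_inv_mulVec_comm {n : Type*} [Fintype n] [DecidableEq n] {A : Matrix n n R}
    (hA : A.IsSymm) (v w : n → R) : v ⬝ᵥ (A⁻¹ *ᵥ w) = w ⬝ᵥ (A⁻¹ *ᵥ v) := by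
  rw [dotProduct_mulVec, ← mulVec_transpose, hA.inv.eq, dotProduct_comm]

theorem dotProduct_mulVec_comp_equiv {n : Type*} [Fintype n] {B : Matrix n n R} (e : n ≃ n)
    (hB : B.submatrix e e = B) (v : n → R) : (v ∘ e) ⬝ᵥ (B *ᵥ (v ∘ e)) = v ⬝ᵥ (B *ᵥ v) := by
  conv_lhs => rw [← hB, submatrix_mulVec_equiv, Function.comp_assoc, e.self_comp_symm,
    Function.comp_id]
  exact e.sum_comp fun i => v i * (B *ᵥ v) i

theorem IsSymm.dotProduct_eq_of_mulVec_eq {m : ℕ} {M : Matrix (Fin (m + 1)) (Fin (m + 1)) R}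
    (hM : M.IsSymm) (hA : IsUnit (M.submatrix Fin.castSucc Fin.castSucc).det)
    {x b : Fin (m + 1) → R} (hx : M *ᵥ x = b) :
    b ⬝ᵥ x = Fin.init b ⬝ᵥ ((M.submatrix Fin.castSucc Fin.castSucc)⁻¹ *ᵥ Fin.init b) +
      x (Fin.last m) ^ 2 * (M (Fin.last m) (Fin.last m) - Fin.init (M (Fin.last m)) ⬝ᵥ
        ((M.submatrix Fin.castSucc Fin.castSucc)⁻¹ *ᵥ Fin.init (M (Fin.last m)))) := by
  set A := M.submatrix Fin.castSucc Fin.castSucc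
  set c := Fin.init (M (Fin.last m))
  set u := x (Fin.last m)
  have hinit : A *ᵥ Fin.init x + u • c = Fin.init b := by
    ext i
    rw [← hx]
    simp [mulVec, dotProduct, Fin.sum_univ_castSucc, A, c, u, Fin.init, hM.apply, mul_comm]
  have hlast : c ⬝ᵥ Fin.init x + M (Fin.last m) (Fin.last m) * u = b (Fin.last m) := by
    rw [← hx]
    simp [mulVec, dotProduct, Fin.sum_univ_castSucc, c, u, Fin.init]
  have hy : Fin.init x = A⁻¹ *ᵥ Fin.init b - u • (A⁻¹ *ᵥ c) := by
    rw [← hinit, mulVec_add, mulVec_mulVec, nonsing_inv_mul _ hA, one_mulVec, mulVec_smul,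
      add_sub_cancel_right]
  have hsplit : b ⬝ᵥ x = Fin.init b ⬝ᵥ Fin.init x + b (Fin.last m) * u := by
    simp [dotProduct, Fin.sum_univ_castSucc, Fin.init, u]
  rw [hsplit, ← hlast, hy]
  simp only [dotProduct_sub, dotProduct_smul, smul_eq_mul]
  rw [(hM.submatrix _).dotProduct_inv_mulVec_comm (Fin.init b) c]
  ring

end Bordering

def toeplitz {α : Type*} (a : ℤ → α) (n : ℕ) : Matrix (Fin n) (Fin n) α :=
  of fun i j => a (i - j)

section Toeplitz
variable {α : Type*} (a : ℤ → α)

theorem toeplitz_submatrix_succ (n : ℕ) :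
    (toeplitz a (n + 1)).submatrix Fin.succ Fin.succ = toeplitz a n := by
  ext i j
  simp [toeplitz]

theorem toeplitz_submatrix_castSucc (n : ℕ) :
    (toeplitz a (n + 1)).submatrix Fin.castSucc Fin.castSucc = toeplitz a n :=
  rfl

theorem toeplitz_submatrix_revPerm (n : ℕ) :
    (toeplitz a n).submatrix Fin.revPerm Fin.revPerm = (toeplitz a n)ᵀ := by
  ext i j
  simp only [toeplitz, submatrix_apply, transpose_apply, of_apply, Fin.revPerm_apply, Fin.val_rev]
  congr 1
  omega

theorem isSymm_toeplitz {a : ℤ → α} (ha : ∀ k, a (-k) = a k) (n : ℕ) :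
    (toeplitz a n).IsSymm := by
  ext i j
  simp only [toeplitz, transpose_apply, of_apply, ← ha (i - j), neg_sub]

end Toeplitz

section SymmetricToeplitz
variable {R : Type*} [CommRing R] {a : ℤ → R}

noncomputable def toeplitzSchurCompl (a : ℤ → R) (n : ℕ) : R :=
  a 0 - (fun j : Fin n => a (j + 1)) ⬝ᵥ ((toeplitz a n)⁻¹ *ᵥ fun j => a (j + 1))

theorem det_toeplitz_succ (ha : ∀ k, a (-k) = a k) {n : ℕ} (hT : IsUnit (toeplitz a n).det) :
    (toeplitz a (n + 1)).det = (toeplitz a n).det * toeplitzSchurCompl a n := by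
  rw [← toeplitz_submatrix_succ] at hT
  rw [det_succ_eq_det_submatrix_succ_mul _ hT, toeplitz_submatrix_succ]
  congr 3
  ext j
  simp [toeplitz, ← ha (_ + 1)]

theorem toeplitzSchurCompl_succ (ha : ∀ k, a (-k) = a k) {m : ℕ}
    (hT : IsUnit (toeplitz a m).det) (hT' : IsUnit (toeplitz a (m + 1)).det) :
    toeplitzSchurCompl a (m + 1) = toeplitzSchurCompl a m *
      (1 - ((toeplitz a (m + 1))⁻¹ *ᵥ fun j => a (j + 1)) (Fin.last m) ^ 2) := by
  set b : Fin (m + 1) → R := fun j => a (j + 1)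
  have hx : toeplitz a (m + 1) *ᵥ ((toeplitz a (m + 1))⁻¹ *ᵥ b) = b := by
    rw [mulVec_mulVec, mul_nonsing_inv _ hT', one_mulVec]
  have key := (isSymm_toeplitz ha _).dotProduct_eq_of_mulVec_eq
    (by rwa [toeplitz_submatrix_castSucc]) hx
  have hrow : Fin.init (toeplitz a (m + 1) (Fin.last m)) =
      (fun j : Fin m => a (j + 1)) ∘ Fin.revPerm := by
    ext j
    simp only [toeplitz, Fin.init, of_apply, Function.comp_apply, Fin.revPerm_apply, Fin.val_rev,
      Fin.val_last, Fin.val_castSucc]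
    congr 1
    omega
  have hcorner : toeplitz a (m + 1) (Fin.last m) (Fin.last m) = a 0 := by
    simp [toeplitz]
  have hpersym : (toeplitz a m)⁻¹.submatrix Fin.revPerm Fin.revPerm = (toeplitz a m)⁻¹ := by
    rw [← inv_submatrix_equiv, toeplitz_submatrix_revPerm, (isSymm_toeplitz ha m).eq]
  have hinit : Fin.init b = fun j : Fin m => a (j + 1) := rfl
  rw [toeplitz_submatrix_castSucc, hinit, hrow, hcorner,
    dotProduct_mulVec_comp_equiv _ hpersym] at key
  rw [toeplitzSchurCompl, key, toeplitzSchurCompl]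
  ring

end SymmetricToeplitz

theorem det_toeplitz_mul_det_div_sq {K : Type*} [Field K] {a : ℤ → K} (ha : ∀ k, a (-k) = a k)
    {m : ℕ} (h₀ : (toeplitz a m).det ≠ 0) (h₁ : (toeplitz a (m + 1)).det ≠ 0) :
    (toeplitz a (m + 2)).det * (toeplitz a m).det / (toeplitz a (m + 1)).det ^ 2 =
      1 - ((toeplitz a (m + 1))⁻¹ *ᵥ fun j => a (j + 1)) (Fin.last m) ^ 2 := by
  have hD := det_toeplitz_succ ha h₀.isUnit
  have hσ : toeplitzSchurCompl a m ≠ 0 := right_ne_zero_of_mul (hD ▸ h₁)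
  rw [det_toeplitz_succ ha h₁.isUnit, toeplitzSchurCompl_succ ha h₀.isUnit h₁.isUnit]
  field_simp
  rw [hD]
  ring

end Matrix

section Fourier
open Real

noncomputable def fourierCosCoeff (w : ℝ → ℝ) (k : ℤ) : ℝ :=
  (1 / (2 * π)) * ∫ θ in (0 : ℝ)..(2 * π), w θ * cos (k * θ)

theorem fourierCosCoeff_neg (w : ℝ → ℝ) (k : ℤ) :
    fourierCosCoeff w (-k) = fourierCosCoeff w k := by
  simp [fourierCosCoeff, neg_mul, cos_neg]

theorem fourierCosCoeff_const (c : ℝ) (k : ℤ) :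
    fourierCosCoeff (fun _ => c) k = if k = 0 then c else 0 := by
  split_ifs with hk
  · simp only [fourierCosCoeff, hk, Int.cast_zero, zero_mul, cos_zero, mul_one,
      intervalIntegral.integral_const, smul_eq_mul, sub_zero]
    field_simp
  · have hk' : (k : ℝ) ≠ 0 := Int.cast_ne_zero.mpr hk
    have hsin : sin (k * (2 * π)) = 0 := by simpa using sin_add_int_mul_two_pi 0 k
    simp [fourierCosCoeff, intervalIntegral.integral_const_mul,
      intervalIntegral.integral_comp_mul_left (fun θ => cos θ) hk', hsin]

theorem sum_sum_mul_cos_sub {ι : Type*} [Fintype ι] (x α : ι → ℝ) :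
    ∑ i, ∑ j, x i * x j * cos (α i - α j) =
      (∑ i, x i * cos (α i)) ^ 2 + (∑ i, x i * sin (α i)) ^ 2 := by
  simp only [sq, Finset.sum_mul_sum, ← Finset.sum_add_distrib, cos_sub]
  congr! 2 with i - j -
  ring

theorem dotProduct_toeplitz_fourierCosCoeff_mulVec {w : ℝ → ℝ} (hw : Continuous w) {n : ℕ}
    (x : Fin n → ℝ) :
    x ⬝ᵥ (toeplitz (fourierCosCoeff w) n *ᵥ x) = (1 / (2 * π)) * ∫ θ in (0 : ℝ)..(2 * π),
      w θ * ((∑ j, x j * cos (j * θ)) ^ 2 + (∑ j, x j * sin (j * θ)) ^ 2) := by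
  have hexpand : ∀ θ, w θ * ((∑ j, x j * cos (j * θ)) ^ 2 + (∑ j, x j * sin (j * θ)) ^ 2) =
      ∑ i : Fin n, ∑ j : Fin n, x i * x j * (w θ * cos (((i - j : ℤ) : ℝ) * θ)) := by
    intro θ
    simp only [← sum_sum_mul_cos_sub, Finset.mul_sum, Int.cast_sub, Int.cast_natCast, sub_mul]
    congr! 2 with i - j -
    ring
  simp_rw [hexpand]
  rw [intervalIntegral.integral_finsetSum fun i _ => (by fun_prop : Continuous fun θ =>
    ∑ j : Fin n, x i * x j * (w θ * cos (((i - j : ℤ) : ℝ) * θ))).intervalIntegrable _ _]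
  simp only [dotProduct, mulVec, toeplitz, of_apply, fourierCosCoeff, Finset.mul_sum]
  congr! 1 with i -
  rw [intervalIntegral.integral_finsetSum fun j _ => (by fun_prop : Continuous fun θ =>
    x i * x j * (w θ * cos (((i - j : ℤ) : ℝ) * θ))).intervalIntegrable _ _]
  rw [Finset.mul_sum]
  congr! 1 with j -
  rw [intervalIntegral.integral_const_mul]
  ring

theorem posDef_toeplitz_fourierCosCoeff {w : ℝ → ℝ} (hw : Continuous w) {c : ℝ} (hc : 0 < c)
    (hwc : ∀ θ, c ≤ w θ) (n : ℕ) : (toeplitz (fourierCosCoeff w) n).PosDef := by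
  refine posDef_iff_dotProduct_mulVec.mpr
    ⟨isHermitian_iff_isSymm.mpr (isSymm_toeplitz (fourierCosCoeff_neg w) n), fun x hx => ?_⟩
  have hconst : toeplitz (fourierCosCoeff fun _ => c) n = c • 1 := by
    ext i j
    simp [toeplitz, fourierCosCoeff_const, one_apply, sub_eq_zero, Fin.ext_iff]
  rw [star_trivial]
  calc 0 < c * (x ⬝ᵥ x) := mul_pos hc (by simpa using dotProduct_star_self_pos_iff.mpr hx)
    _ = x ⬝ᵥ (toeplitz (fourierCosCoeff fun _ => c) n *ᵥ x) := by
      rw [hconst, smul_mulVec, one_mulVec, dotProduct_smul, smul_eq_mul]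
    _ ≤ x ⬝ᵥ (toeplitz (fourierCosCoeff w) n *ᵥ x) := by
      rw [dotProduct_toeplitz_fourierCosCoeff_mulVec continuous_const,
        dotProduct_toeplitz_fourierCosCoeff_mulVec hw]
      gcongr
      refine intervalIntegral.integral_mono_on two_pi_pos.le ?_ ?_ fun θ _ => ?_
      · exact (by fun_prop : Continuous _).intervalIntegrable _ _
      · exact (by fun_prop : Continuous _).intervalIntegrable _ _
      · gcongr
        exact hwc θ

end Fourier

-- `Tmat n t` is definitionally `toeplitz (fourierCosCoeff fun θ => exp (2 * t * cos θ)) n`.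
theorem Tmat_posDef (n : ℕ) (t : ℝ) : (Tmat n t).PosDef := by
  refine posDef_toeplitz_fourierCosCoeff (w := fun θ => Real.exp (2 * t * Real.cos θ))
    (by fun_prop) (Real.exp_pos (-(2 * |t|))) (fun θ => Real.exp_le_exp.mpr ?_) n
  nlinarith [Real.neg_one_le_cos θ, Real.cos_le_one θ, le_abs_self t, neg_abs_le t]

theorem dotProduct_deltaMinus {m : ℕ} (v : Fin (m + 1) → ℝ) :
    v ⬝ᵥ deltaMinus (m + 1) = v (Fin.last m) := by
  have h : ∀ i : Fin (m + 1), (i : ℕ) = m ↔ i = Fin.last m := fun i => by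
    rw [Fin.ext_iff, Fin.val_last]
  simp [dotProduct, deltaMinus, h]

/-- D_{n+1}(t)·D_{n−1}(t)/D_n(t)² = 1 − U_n(t)². -/
theorem Dn_ratio_eq_one_sub_Un_sq (n : ℕ) (hn : 1 ≤ n) (t : ℝ) :
    Dn (n + 1) t * Dn (n - 1) t / (Dn n t) ^ 2 = 1 - (Un n t) ^ 2 := by
  obtain ⟨m, rfl⟩ := Nat.exists_eq_add_of_le' hn
  rw [Un, dotProduct_deltaMinus]
  exact det_toeplitz_mul_det_div_sq (fourierCosCoeff_neg _) (Tmat_posDef m t).det_pos.ne'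
    (Tmat_posDef (m + 1) t).det_pos.ne'
end

section
/- For every integer n ≥ 1, as t → 0 one has U_n(t) = (−1)^{n+1}·t^n/n! + O(t^{n+1}); in particular lim_{t→0} U_n(t)/t^n = (−1)^{n+1}/n!, and consequently 1 − U_n(t)² = 1 − t^{2n}/(n!)² + O(t^{2n+1}). -/
open MeasureTheory Matrix Filter

/-!
Expanding `exp (2 t cos θ)` to order `|k|` and using `∫ cos^m θ cos kθ = 0` for `m < k` gives
`f_k(t) = t^|k| / |k|! + O(t^(|k|+1))`. By Cramer's rule `U_n = N_n / D_n`, where `D_n = det T_n`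
and `N_n` is the determinant of `T_n` with its last column replaced by `f⁺`. Both are
determinants of matrices `(f_{r_j - c_k})`; in the Leibniz expansion the term of `σ` has order
`∑ |r_{σ k} - c_k| ≥ ∑ r - ∑ c =: w`, with equality exactly when all differences are nonnegative.
So the determinant is `t^w` times the determinant of the lower triangular array `1 / (r_j - c_k)!`,
up to `O(t^(w+1))`. For `D_n` this array is unitriangular and `w = 0`; for `N_n` one has `w = n`,
and the array is the exponential Toeplitz matrix `L` with last column `(1/(j+1)!)_j`, whose
determinant is the last coordinate `(-1)^(n-1)/n!` of the solution of `L x = (1/(j+1)!)_j`.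
-/

open Asymptotics Topology Finset

section LeadingTerm

variable {𝕜 : Type*} [NormedField 𝕜]

def HasLeadingTerm (f : 𝕜 → 𝕜) (a : 𝕜) (m : ℕ) : Prop :=
  (fun t => f t - a * t ^ m) =O[𝓝 0] fun t => t ^ (m + 1)

theorem isBigO_pow_pow_of_le {m k : ℕ} (h : k ≤ m) :
    (fun t : 𝕜 => t ^ m) =O[𝓝 0] fun t => t ^ k := by
  rcases h.eq_or_lt with rfl | h
  · exact isBigO_refl _ _
  · exact (isLittleO_pow_pow h).isBigO

namespace HasLeadingTerm

variable {f g : 𝕜 → 𝕜} {a b : 𝕜} {m k : ℕ}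

theorem congr (hf : HasLeadingTerm f a m) (h : ∀ t, f t = g t) : HasLeadingTerm g a m :=
  (funext h : f = g) ▸ hf

theorem isBigO (hf : HasLeadingTerm f a m) : f =O[𝓝 0] fun t => t ^ m := by
  simpa using (IsBigO.trans hf (isBigO_pow_pow_of_le m.le_succ)).add
    ((isBigO_refl (fun t : 𝕜 => t ^ m) _).const_mul_left a)

theorem const_mul (hf : HasLeadingTerm f a m) (c : 𝕜) :
    HasLeadingTerm (fun t => c * f t) (c * a) m := by
  simpa only [HasLeadingTerm, mul_assoc, ← mul_sub] using IsBigO.const_mul_left hf c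

theorem mul (hf : HasLeadingTerm f a m) (hg : HasLeadingTerm g b k) :
    HasLeadingTerm (fun t => f t * g t) (a * b) (m + k) := by
  have h := (IsBigO.mul hf hg.isBigO).add
    (((isBigO_refl (fun t : 𝕜 => t ^ m) _).const_mul_left a).mul hg |>.congr_right
      fun t => show t ^ m * t ^ (k + 1) = t ^ (m + 1) * t ^ k by ring)
  exact h.congr (fun t => by ring) (fun t => by ring)

theorem prod {ι : Type*} (s : Finset ι) {f : ι → 𝕜 → 𝕜} {a : ι → 𝕜} {m : ι → ℕ}
    (h : ∀ i ∈ s, HasLeadingTerm (f i) (a i) (m i)) :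
    HasLeadingTerm (fun t => ∏ i ∈ s, f i t) (∏ i ∈ s, a i) (∑ i ∈ s, m i) := by
  classical
  induction s using Finset.induction_on with
  | empty => simpa [HasLeadingTerm] using isBigO_zero _ _
  | insert i s hi ih =>
    simp only [prod_insert hi, sum_insert hi]
    exact (h i (mem_insert_self i s)).mul (ih fun j hj => h j (mem_insert_of_mem hj))

theorem sum {ι : Type*} (s : Finset ι) {f : ι → 𝕜 → 𝕜} {a : ι → 𝕜}
    (h : ∀ i ∈ s, HasLeadingTerm (f i) (a i) m) :
    HasLeadingTerm (fun t => ∑ i ∈ s, f i t) (∑ i ∈ s, a i) m := by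
  simpa only [HasLeadingTerm, sum_mul, ← sum_sub_distrib] using IsBigO.fun_sum h

theorem zero_of_lt (hf : HasLeadingTerm f a m) (h : k < m) : HasLeadingTerm f 0 k := by
  simpa [HasLeadingTerm] using hf.isBigO.trans (isBigO_pow_pow_of_le h)

theorem tendsto (hg : HasLeadingTerm g b 0) : Tendsto g (𝓝 0) (𝓝 b) := by
  have h : Tendsto (fun t => g t - b) (𝓝 0) (𝓝 0) :=
    IsBigO.trans_tendsto (by simpa [HasLeadingTerm] using hg)
      (by simpa using (continuous_pow 1).tendsto (0 : 𝕜))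
  simpa using h.add_const b

theorem inv (hg : HasLeadingTerm g b 0) (hb : b ≠ 0) :
    HasLeadingTerm (fun t => (g t)⁻¹) b⁻¹ 0 := by
  have hinv : (fun t => (g t)⁻¹) =O[𝓝 0] fun _ => (1 : 𝕜) := (hg.tendsto.inv₀ hb).isBigO_one 𝕜
  have h := ((IsBigO.mul hg hinv).neg_left).const_mul_left b⁻¹
  refine h.congr' ?_ (by simp)
  filter_upwards [hg.tendsto.eventually_ne hb] with t ht
  field_simp
  simp

theorem tendsto_div_pow (hf : HasLeadingTerm f a m) :
    Tendsto (fun t => f t / t ^ m) (𝓝[≠] 0) (𝓝 a) := by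
  have h := ((IsBigO.trans_isLittleO hf (isLittleO_pow_pow m.lt_succ_self)).mono
    (nhdsWithin_le_nhds (s := {0}ᶜ))).tendsto_div_nhds_zero
  rw [← zero_add a]
  refine (h.add_const a).congr' ?_
  filter_upwards [self_mem_nhdsWithin] with t (ht : t ≠ 0)
  field_simp
  ring

end HasLeadingTerm

end LeadingTerm

section FourierCoefficient

open Real

theorem integral_cos_pow_succ_mul_cos (m : ℕ) (x : ℝ) :
    ∫ θ in (0 : ℝ)..2 * π, cos θ ^ (m + 1) * cos (x * θ) =
      ((∫ θ in (0 : ℝ)..2 * π, cos θ ^ m * cos ((x + 1) * θ)) +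
        ∫ θ in (0 : ℝ)..2 * π, cos θ ^ m * cos ((x - 1) * θ)) / 2 := by
  rw [← intervalIntegral.integral_add (by apply Continuous.intervalIntegrable; fun_prop)
    (by apply Continuous.intervalIntegrable; fun_prop), ← intervalIntegral.integral_div]
  congr 1 with θ
  have h := cos_add θ (x * θ)
  have h' := cos_sub (x * θ) θ
  rw [show θ + x * θ = (x + 1) * θ by ring] at h
  rw [show x * θ - θ = (x - 1) * θ by ring] at h'
  rw [h, h', pow_succ]
  ring

theorem integral_cos_nat_mul {k : ℕ} (hk : k ≠ 0) :
    ∫ θ in (0 : ℝ)..2 * π, cos (k * θ) = 0 := by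
  rw [intervalIntegral.integral_comp_mul_left (fun θ => cos θ) (Nat.cast_ne_zero.mpr hk),
    integral_cos, show (k : ℝ) * (2 * π) = (2 * k : ℕ) * π by push_cast; ring, sin_nat_mul_pi]
  simp

theorem integral_cos_pow_mul_cos_of_lt {m k : ℕ} (h : m < k) :
    ∫ θ in (0 : ℝ)..2 * π, cos θ ^ m * cos (k * θ) = 0 := by
  induction m generalizing k with
  | zero => simpa using integral_cos_nat_mul (by omega : k ≠ 0)
  | succ m ih =>
    obtain ⟨j, rfl⟩ : ∃ j, k = j + 1 := ⟨k - 1, by omega⟩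
    have h₁ := ih (k := j + 2) (by omega)
    have h₂ := ih (k := j) (by omega)
    push_cast at h₁ ⊢
    rw [integral_cos_pow_succ_mul_cos, add_sub_cancel_right, add_assoc, one_add_one_eq_two, h₁, h₂]
    simp

theorem integral_cos_pow_mul_cos_self (k : ℕ) :
    ∫ θ in (0 : ℝ)..2 * π, cos θ ^ k * cos (k * θ) = 2 * π / 2 ^ k := by
  induction k with
  | zero => simp
  | succ k ih =>
    rw [integral_cos_pow_succ_mul_cos]
    push_cast
    rw [add_sub_cancel_right, ih, show (k : ℝ) + 1 + 1 = (k + 2 : ℕ) by push_cast; ring,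
      integral_cos_pow_mul_cos_of_lt (by omega)]
    ring

theorem integral_expTaylor_mul_cos (K : ℕ) (t : ℝ) :
    ∫ θ in (0 : ℝ)..2 * π,
        (∑ i ∈ range (K + 1), (2 * t * cos θ) ^ i / i.factorial) * cos (K * θ) =
      2 * π * (t ^ K / K.factorial) := by
  have hterm : ∀ i, ∫ θ in (0 : ℝ)..2 * π, (2 * t * cos θ) ^ i / i.factorial * cos (K * θ) =
      (2 * t) ^ i / i.factorial * ∫ θ in (0 : ℝ)..2 * π, cos θ ^ i * cos (K * θ) := fun i => by
    rw [← intervalIntegral.integral_const_mul]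
    congr 1 with θ
    ring
  simp_rw [sum_mul]
  rw [intervalIntegral.integral_finsetSum
      fun i _ => by apply Continuous.intervalIntegrable; fun_prop,
    sum_range_succ, sum_eq_zero fun i hi => by
      rw [hterm, integral_cos_pow_mul_cos_of_lt (mem_range.mp hi), mul_zero],
    hterm, integral_cos_pow_mul_cos_self]
  field_simp
  ring

theorem fk_natCast_sub_eq_integral_remainder (K : ℕ) (t : ℝ) :
    fk t K - (K.factorial : ℝ)⁻¹ * t ^ K = (2 * π)⁻¹ * ∫ θ in (0 : ℝ)..2 * π,
      (exp (2 * t * cos θ) - ∑ i ∈ range (K + 1), (2 * t * cos θ) ^ i / i.factorial) *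
        cos (K * θ) := by
  simp only [sub_mul]
  rw [intervalIntegral.integral_sub (by apply Continuous.intervalIntegrable; fun_prop)
    (by apply Continuous.intervalIntegrable; fun_prop), integral_expTaylor_mul_cos, fk]
  field_simp
  push_cast
  ring

theorem hasLeadingTerm_fk_natCast (K : ℕ) :
    HasLeadingTerm (fun t => fk t K) (K.factorial : ℝ)⁻¹ K := by
  set R : ℝ → ℝ := fun x => exp x - ∑ i ∈ range (K + 1), x ^ i / i.factorial
  set C : ℝ := (K + 1).succ / ((K + 1).factorial * (K + 1 : ℕ))
  have hR : ∀ x, |x| ≤ 1 → |R x| ≤ |x| ^ (K + 1) * C := fun x hx => exp_bound hx K.succ_pos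
  refine IsBigO.of_bound (2 ^ (K + 1) * C) ?_
  filter_upwards [Metric.closedBall_mem_nhds (0 : ℝ) (by norm_num : (0 : ℝ) < 1 / 2)] with t ht
  rw [Metric.mem_closedBall, dist_zero_right, norm_eq_abs] at ht
  have hpoint : ∀ θ, ‖R (2 * t * cos θ) * cos (K * θ)‖ ≤ (2 * |t|) ^ (K + 1) * C := fun θ => by
    have hx : |2 * t * cos θ| ≤ 2 * |t| := by
      rw [abs_mul, abs_mul, abs_two]
      exact mul_le_of_le_one_right (by positivity) (abs_cos_le_one θ)
    rw [norm_mul, norm_eq_abs, norm_eq_abs]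
    calc |R (2 * t * cos θ)| * |cos (K * θ)| ≤ |R (2 * t * cos θ)| :=
          mul_le_of_le_one_right (abs_nonneg _) (abs_cos_le_one _)
      _ ≤ |2 * t * cos θ| ^ (K + 1) * C := hR _ (by linarith)
      _ ≤ (2 * |t|) ^ (K + 1) * C := by gcongr
  have hint := intervalIntegral.norm_integral_le_of_norm_le_const (a := 0) (b := 2 * π)
    fun θ _ => hpoint θ
  rw [sub_zero, abs_of_pos two_pi_pos] at hint
  rw [fk_natCast_sub_eq_integral_remainder, norm_mul, norm_inv, norm_eq_abs,
    abs_of_pos two_pi_pos, norm_pow, norm_eq_abs]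
  calc (2 * π)⁻¹ * ‖∫ θ in (0 : ℝ)..2 * π, R (2 * t * cos θ) * cos (K * θ)‖
      ≤ (2 * π)⁻¹ * ((2 * |t|) ^ (K + 1) * C * (2 * π)) := by gcongr
    _ = 2 ^ (K + 1) * C * |t| ^ (K + 1) := by
        rw [mul_pow]
        field_simp

theorem fk_neg (t : ℝ) (k : ℤ) : fk t (-k) = fk t k := by
  simp only [fk, Int.cast_neg, neg_mul, cos_neg]

theorem hasLeadingTerm_fk (k : ℤ) :
    HasLeadingTerm (fun t => fk t k) (k.natAbs.factorial : ℝ)⁻¹ k.natAbs := by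
  obtain ⟨K, rfl | rfl⟩ := Int.eq_nat_or_neg k
  · exact hasLeadingTerm_fk_natCast K
  · simpa only [fk_neg, Int.natAbs_neg, Int.natAbs_natCast] using hasLeadingTerm_fk_natCast K

end FourierCoefficient

section Determinant

variable {𝕜 : Type*} [NormedField 𝕜] {ι : Type*} [Fintype ι]
  {F : ℤ → 𝕜 → 𝕜} {a : ℤ → 𝕜} {r c : ι → ℤ} {w : ℕ}

theorem hasLeadingTerm_prod_perm (hF : ∀ k, HasLeadingTerm (F k) (a k) k.natAbs)
    (hw : ∑ j, r j - ∑ k, c k = w) (σ : Equiv.Perm ι) :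
    HasLeadingTerm (fun t => ∏ k, F (r (σ k) - c k) t)
      (∏ k, if c k ≤ r (σ k) then a (r (σ k) - c k) else 0) w := by
  have hsum : ∑ k, (r (σ k) - c k) = w := by
    rw [sum_sub_distrib, Equiv.sum_comp σ r, hw]
  have hprod := HasLeadingTerm.prod univ fun k _ => hF (r (σ k) - c k)
  by_cases hpos : ∀ k, c k ≤ r (σ k)
  · have hdeg : ∑ k, (r (σ k) - c k).natAbs = w := by
      zify
      rw [← hsum]
      exact sum_congr rfl fun k _ => abs_of_nonneg (sub_nonneg.2 (hpos k))
    simpa only [hdeg, hpos, if_true] using hprod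
  · simp only [not_forall, not_le] at hpos
    obtain ⟨k₀, hk₀⟩ := hpos
    have hdeg : w < ∑ k, (r (σ k) - c k).natAbs := by
      zify
      rw [← hsum]
      exact sum_lt_sum (fun k _ => le_abs_self _)
        ⟨k₀, mem_univ _, by rw [abs_of_neg (by omega)]; omega⟩
    rw [prod_eq_zero (mem_univ k₀) (if_neg hk₀.not_ge)]
    exact hprod.zero_of_lt hdeg

theorem hasLeadingTerm_det [DecidableEq ι] (hF : ∀ k, HasLeadingTerm (F k) (a k) k.natAbs)
    (hw : ∑ j, r j - ∑ k, c k = w) :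
    HasLeadingTerm (fun t => (of fun j k => F (r j - c k) t).det)
      (of fun j k => if c k ≤ r j then a (r j - c k) else 0).det w := by
  simp only [det_apply', of_apply]
  exact HasLeadingTerm.sum univ fun σ _ => (hasLeadingTerm_prod_perm hF hw σ).const_mul _

end Determinant

theorem Matrix.det_updateCol_mulVec {R : Type*} [CommRing R] {ι : Type*} [Fintype ι]
    [DecidableEq ι] (A : Matrix ι ι R) (x : ι → R) (i : ι) :
    (A.updateCol i (A *ᵥ x)).det = x i * A.det := by
  rw [← cramer_apply, cramer_eq_adjugate_mulVec, mulVec_mulVec, adjugate_mul, smul_mulVec,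
    one_mulVec, Pi.smul_apply, smul_eq_mul, mul_comm]

theorem Matrix.inv_mulVec_apply {K : Type*} [Field K] {ι : Type*} [Fintype ι] [DecidableEq ι]
    (A : Matrix ι ι K) (b : ι → K) (i : ι) :
    (A⁻¹ *ᵥ b) i = (A.updateCol i b).det / A.det := by
  rw [inv_def, smul_mulVec, ← cramer_eq_adjugate_mulVec, Pi.smul_apply, cramer_apply,
    Ring.inverse_eq_inv', smul_eq_mul, div_eq_inv_mul]

section ExpToeplitz

variable {K : Type*} [Field K]

def expLowerToeplitz (n : ℕ) : Matrix (Fin n) (Fin n) K :=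
  of fun j k => if (k : ℤ) ≤ j then ((((j : ℤ) - k).natAbs.factorial : K))⁻¹ else 0

theorem det_expLowerToeplitz (n : ℕ) : (expLowerToeplitz n : Matrix (Fin n) (Fin n) K).det = 1 := by
  rw [det_of_isLowerTriangular]
  · simp [expLowerToeplitz]
  · intro j k hjk
    have hjk : (j : ℕ) < k := hjk
    simp only [expLowerToeplitz, of_apply]
    rw [if_neg (by omega)]

theorem sum_range_neg_one_pow_mul_choose_succ (j : ℕ) :
    ∑ i ∈ range (j + 1), (-1 : ℤ) ^ i * (j + 1).choose (i + 1) = 1 := by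
  have h := Int.alternating_sum_range_choose (n := j + 1)
  rw [sum_range_succ', if_neg j.succ_ne_zero] at h
  simp only [pow_succ, mul_neg_one, neg_mul, sum_neg_distrib, pow_zero, Nat.choose_zero_right,
    Nat.cast_one, one_mul] at h
  linarith

variable [CharZero K]

theorem sum_range_inv_factorial_mul_neg_one_pow_div (j : ℕ) :
    ∑ i ∈ range (j + 1), ((j - i).factorial : K)⁻¹ * ((-1) ^ i / (i + 1).factorial) =
      ((j + 1).factorial : K)⁻¹ := by
  have h := congrArg (Int.cast : ℤ → K) (sum_range_neg_one_pow_mul_choose_succ j)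
  push_cast at h
  calc _ = ((j + 1).factorial : K)⁻¹ *
        ∑ i ∈ range (j + 1), (-1) ^ i * ((j + 1).choose (i + 1) : K) := by
        rw [mul_sum]
        refine sum_congr rfl fun i hi => ?_
        have : ((j + 1).factorial : K) ≠ 0 := Nat.cast_ne_zero.mpr (Nat.factorial_ne_zero _)
        rw [Nat.cast_choose K (by simpa using hi), Nat.add_sub_add_right]
        field_simp
    _ = _ := by rw [h, mul_one]

-- The vector solved for is the coefficient sequence of `(1 - e^{-z}) / z`, since
-- `e^z (1 - e^{-z}) / z = (e^z - 1) / z`.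
theorem expLowerToeplitz_mulVec (n : ℕ) :
    expLowerToeplitz n *ᵥ (fun k : Fin n => ((-1) ^ (k : ℕ) / ((k : ℕ) + 1).factorial : K)) =
      fun j : Fin n => (((j : ℕ) + 1).factorial : K)⁻¹ := by
  ext j
  set g : ℕ → K := fun i =>
    if i ≤ j then ((j - i : ℕ).factorial : K)⁻¹ * ((-1) ^ i / (i + 1).factorial) else 0
  calc _ = ∑ k : Fin n, g k := by
        simp only [mulVec, dotProduct, expLowerToeplitz, of_apply, g, Nat.cast_le, ite_mul,
          zero_mul]
        refine sum_congr rfl fun k _ => ?_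
        split_ifs with h
        · congr 4
          omega
        · rfl
    _ = ∑ i ∈ range n, g i := Fin.sum_univ_eq_sum_range g n
    _ = ∑ i ∈ range (j + 1), g i := by
        rw [← sum_range_add_sum_Ico g j.isLt, add_eq_left]
        exact sum_eq_zero fun i hi => if_neg (by simp only [mem_Ico] at hi; omega)
    _ = _ := by
        rw [← sum_range_inv_factorial_mul_neg_one_pow_div]
        exact sum_congr rfl fun i hi => if_pos (by simp only [mem_range] at hi; omega)

theorem det_expLowerToeplitz_updateCol_last (m : ℕ) :
    ((expLowerToeplitz (m + 1)).updateCol (Fin.last m)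
      (fun j : Fin (m + 1) => (((j : ℕ) + 1).factorial : K)⁻¹)).det =
      (-1) ^ m / (m + 1).factorial := by
  rw [← expLowerToeplitz_mulVec, det_updateCol_mulVec, det_expLowerToeplitz]
  simp

end ExpToeplitz

section Toeplitz

theorem hasLeadingTerm_Dn (n : ℕ) : HasLeadingTerm (Dn n) 1 0 := by
  have h : HasLeadingTerm (Dn n) (expLowerToeplitz n).det 0 :=
    hasLeadingTerm_det (F := fun k t => fk t k) (r := fun j : Fin n => (j : ℤ))
      (c := fun k : Fin n => (k : ℤ)) hasLeadingTerm_fk (by simp)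
  rwa [det_expLowerToeplitz] at h

theorem Tmat_updateCol_last_fplus (m : ℕ) (t : ℝ) :
    (Tmat (m + 1) t).updateCol (Fin.last m) (fplus (m + 1) t) =
      of fun j k : Fin (m + 1) => fk t (j - if k = Fin.last m then -1 else (k : ℤ)) := by
  ext j k
  by_cases hk : k = Fin.last m
  · simp [hk, fplus]
  · simp [hk, Tmat]

theorem hasLeadingTerm_det_Tmat_updateCol_last (m : ℕ) :
    HasLeadingTerm (fun t => ((Tmat (m + 1) t).updateCol (Fin.last m) (fplus (m + 1) t)).det)
      ((-1) ^ m / (m + 1).factorial) (m + 1) := by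
  set c : Fin (m + 1) → ℤ := fun k => if k = Fin.last m then -1 else k
  have hw : ∑ j : Fin (m + 1), (j : ℤ) - ∑ k, c k = (m + 1 : ℕ) := by
    rw [← sum_sub_distrib, sum_eq_single (Fin.last m)]
    · simp [c]
    · intro k _ hk
      simp [c, hk]
    · simp
  have hlead : (of fun j k : Fin (m + 1) =>
      if c k ≤ j then ((((j : ℤ) - c k).natAbs.factorial : ℝ))⁻¹ else 0) =
      (expLowerToeplitz (m + 1)).updateCol (Fin.last m)
        (fun j : Fin (m + 1) => (((j : ℕ) + 1).factorial : ℝ)⁻¹) := by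
    ext j k
    by_cases hk : k = Fin.last m
    · simp [c, hk, Int.natAbs_add_of_nonneg]
    · simp [c, hk, expLowerToeplitz]
  have h := hasLeadingTerm_det (F := fun k t => fk t k) (r := fun j : Fin (m + 1) => (j : ℤ))
    (c := c) hasLeadingTerm_fk hw
  rw [hlead, det_expLowerToeplitz_updateCol_last] at h
  simpa only [Tmat_updateCol_last_fplus] using h

theorem Un_eq_div (m : ℕ) (t : ℝ) :
    Un (m + 1) t =
      ((Tmat (m + 1) t).updateCol (Fin.last m) (fplus (m + 1) t)).det / Dn (m + 1) t := by
  have hδ : deltaMinus (m + 1) = Pi.single (Fin.last m) 1 := by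
    ext i
    simp [deltaMinus, Pi.single_apply, Fin.ext_iff]
  rw [Un, hδ, dotProduct_single, mul_one, inv_mulVec_apply, Dn]

theorem hasLeadingTerm_Un {n : ℕ} (hn : 1 ≤ n) :
    HasLeadingTerm (Un n) ((-1) ^ (n + 1) / n.factorial) n := by
  obtain ⟨m, rfl⟩ : ∃ m, n = m + 1 := ⟨n - 1, by omega⟩
  have h := (hasLeadingTerm_det_Tmat_updateCol_last m).mul
    ((hasLeadingTerm_Dn (m + 1)).inv one_ne_zero)
  rw [show ((-1 : ℝ) ^ (m + 1 + 1) / (m + 1).factorial) = (-1) ^ m / (m + 1).factorial * 1⁻¹ by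
    simp [pow_succ]]
  exact h.congr fun t => by rw [Un_eq_div, div_eq_mul_inv]

end Toeplitz

open Asymptotics in
/-- As t → 0, U_n(t) = (−1)^{n+1} tⁿ/n! + O(t^{n+1}); hence U_n(t)/tⁿ → (−1)^{n+1}/n!
and 1 − U_n(t)² = 1 − t^{2n}/(n!)² + O(t^{2n+1}). -/
theorem Un_asymptotics_at_zero (n : ℕ) (hn : 1 ≤ n) :
    ((fun t : ℝ => Un n t - (-1) ^ (n + 1) * t ^ n / (n.factorial : ℝ)) =O[nhds 0]
        fun t : ℝ => t ^ (n + 1)) ∧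
    Tendsto (fun t : ℝ => Un n t / t ^ n) (nhdsWithin 0 {(0:ℝ)}ᶜ)
      (nhds ((-1) ^ (n + 1) / (n.factorial : ℝ))) ∧
    ((fun t : ℝ => (1 - (Un n t) ^ 2) - (1 - t ^ (2 * n) / (n.factorial : ℝ) ^ 2)) =O[nhds 0]
        fun t : ℝ => t ^ (2 * n + 1)) := by
  have hU := hasLeadingTerm_Un hn
  have hsq : ((-1 : ℝ) ^ (n + 1) / n.factorial) * ((-1) ^ (n + 1) / n.factorial) =
      1 / (n.factorial : ℝ) ^ 2 := by
    rw [← sq, div_pow, ← pow_mul, pow_mul', neg_one_sq, one_pow]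
  refine ⟨hU.congr_left fun t => by ring, hU.tendsto_div_pow, ?_⟩
  refine ((hU.mul hU).neg_left.congr_right fun t => by ring_nf).congr_left fun t => ?_
  rw [hsq]
  ring
end
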